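/- The ellipse E = (Aⁿ − I)^{−1} B(0, e^{−nτ}) is contained in the parallelogram with vertices ±c₁(λ_{n,2}/√(1+γ²))(1, γ) ± c₁(λ_{n,1}/√(1+β²))(1, β), where c₁ = √(1+β²)√(1+γ²)/|β − γ|, λ_{n,1} = e^{−τn}/|1 − λ₁ⁿ|, λ_{n,2} = e^{−τn}/|λ₂ⁿ − 1|. -/

import Mathlib

/-!
In the basis `(1, γ), (1, β)` the map `Aⁿ - I` is diagonal with entries `λ₂ⁿ - 1` and `λ₁ⁿ - 1`,
both nonzero because `Aⁿ - I` is invertible. The `(1, γ)`-coordinate of a vector `y` is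
`⟪(-β, 1), y⟫ / (γ - β)`, so by Cauchy–Schwarz it is at most `√(1 + β²) ‖y‖ / |γ - β|` in absolute
value; symmetrically for `(1, β)`. Applied to `y = (Aⁿ - I) x` with `‖y‖ ≤ e^{-nτ}`, this bounds
the coordinates of `x` by the half-sides of the parallelogram.
-/

/-- The vector `(1, γ)` as a point of Euclidean `ℝ²`. -/
noncomputable def eigVec (γ : ℝ) : EuclideanSpace ℝ (Fin 2) :=
  (WithLp.equiv 2 (Fin 2 → ℝ)).symm ![1, γ]

namespace Matrix

variable {m R : Type*} [Fintype m] [DecidableEq m]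

theorem pow_mulVec_of_mulVec_eq_smul [CommSemiring R] {A : Matrix m m R} {l : R} {v : m → R}
    (h : A *ᵥ v = l • v) (n : ℕ) : A ^ n *ᵥ v = l ^ n • v := by
  induction n with
  | zero => simp
  | succ k ih => rw [pow_succ, ← mulVec_mulVec, h, mulVec_smul, ih, smul_smul, pow_succ']

theorem pow_sub_one_mulVec_of_mulVec_eq_smul [CommRing R] {A : Matrix m m R} {l : R}
    {v : m → R} (h : A *ᵥ v = l • v) (n : ℕ) : (A ^ n - 1) *ᵥ v = (l ^ n - 1) • v := by
  rw [sub_mulVec, pow_mulVec_of_mulVec_eq_smul h, one_mulVec, sub_smul, one_smul]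

theorem ne_zero_of_isUnit_of_mulVec_eq_smul {K : Type*} [Field K] {M : Matrix m m K}
    (hM : IsUnit M) {μ : K} {v : m → K} (hv : v ≠ 0) (h : M *ᵥ v = μ • v) : μ ≠ 0 := by
  rintro rfl
  exact hv (mulVec_injective_iff_isUnit.2 hM (by rw [h, zero_smul, mulVec_zero]))

end Matrix

open Matrix

theorem toEuclideanLin_eigVec {M : Matrix (Fin 2) (Fin 2) ℝ} {μ γ : ℝ}
    (h : M *ᵥ ![1, γ] = μ • ![1, γ]) : toEuclideanLin M (eigVec γ) = μ • eigVec γ :=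
  congrArg (WithLp.toLp 2) h

theorem exists_eq_smul_eigVec_add_smul_eigVec {γ β : ℝ} (hne : γ ≠ β)
    (x : EuclideanSpace ℝ (Fin 2)) : ∃ a b : ℝ, x = a • eigVec γ + b • eigVec β := by
  have hγβ : γ - β ≠ 0 := sub_ne_zero.2 hne
  refine ⟨(x 1 - β * x 0) / (γ - β), (γ * x 0 - x 1) / (γ - β), ?_⟩
  ext i
  fin_cases i <;> simp [eigVec] <;> field_simp <;> ring

theorem abs_le_of_eq_smul_eigVec_add_smul_eigVec {γ β p q : ℝ} (hne : γ ≠ β)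
    {y : EuclideanSpace ℝ (Fin 2)} (hy : y = p • eigVec γ + q • eigVec β) :
    |p| ≤ √(1 + β ^ 2) / |γ - β| * ‖y‖ := by
  set w : EuclideanSpace ℝ (Fin 2) := WithLp.toLp 2 ![-β, 1]
  have hwγ : inner ℝ w (eigVec γ) = γ - β := by
    simp [w, eigVec, EuclideanSpace.inner_toLp_toLp, dotProduct, Fin.sum_univ_two]
    ring
  have hwβ : inner ℝ w (eigVec β) = 0 := by
    simp [w, eigVec, EuclideanSpace.inner_toLp_toLp, dotProduct, Fin.sum_univ_two]
  have hinner : inner ℝ w y = p * (γ - β) := by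
    rw [hy, inner_add_right, real_inner_smul_right, real_inner_smul_right, hwγ, hwβ, mul_zero,
      add_zero]
  have hw : ‖w‖ = √(1 + β ^ 2) := by
    simp [w, EuclideanSpace.norm_eq, Fin.sum_univ_two, add_comm]
  have hpos : 0 < |γ - β| := abs_pos.2 (sub_ne_zero.2 hne)
  rw [div_mul_eq_mul_div, le_div_iff₀ hpos, ← abs_mul, ← hinner, ← hw]
  exact abs_real_inner_le_norm w y

theorem abs_mul_le_mul_div_abs {a c S K : ℝ} (hc : c ≠ 0) (hS : 0 ≤ S) (h : |a * c| ≤ K) :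
    |a * S| ≤ S * (K / |c|) := by
  rw [abs_mul, abs_of_nonneg hS, mul_comm]
  exact mul_le_mul_of_nonneg_left ((le_div_iff₀ (abs_pos.2 hc)).2 (by rwa [← abs_mul])) hS

theorem ellipse_subset_parallelogram_general
    (A : Matrix (Fin 2) (Fin 2) ℝ) (l₁ l₂ γ β : ℝ) (hne : γ ≠ β)
    (hγ : A.mulVec ![1, γ] = l₂ • ![1, γ])
    (hβ : A.mulVec ![1, β] = l₁ • ![1, β])
    (τ : ℝ) (n : ℕ)
    (hinv : IsUnit (A ^ n - 1)) :
    {x : EuclideanSpace ℝ (Fin 2) |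
        ‖Matrix.toEuclideanLin (A ^ n - 1) x‖ ≤ Real.exp (-(n : ℝ) * τ)}
      ⊆ {x : EuclideanSpace ℝ (Fin 2) | ∃ t s : ℝ,
        |t| ≤ Real.sqrt (1 + β ^ 2) * Real.sqrt (1 + γ ^ 2) / |β - γ|
          * (Real.exp (-τ * n) / |l₂ ^ n - 1|) ∧
        |s| ≤ Real.sqrt (1 + β ^ 2) * Real.sqrt (1 + γ ^ 2) / |β - γ|
          * (Real.exp (-τ * n) / |1 - l₁ ^ n|) ∧
        x = (t / Real.sqrt (1 + γ ^ 2)) • eigVec γ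
          + (s / Real.sqrt (1 + β ^ 2)) • eigVec β} := by
  intro x hx
  obtain ⟨a, b, rfl⟩ := exists_eq_smul_eigVec_add_smul_eigVec hne x
  have hγn := pow_sub_one_mulVec_of_mulVec_eq_smul hγ n
  have hβn := pow_sub_one_mulVec_of_mulVec_eq_smul hβ n
  have hc := ne_zero_of_isUnit_of_mulVec_eq_smul hinv (by simp) hγn
  have hd := ne_zero_of_isUnit_of_mulVec_eq_smul hinv (by simp) hβn
  have himage : toEuclideanLin (A ^ n - 1) (a • eigVec γ + b • eigVec β)
      = (a * (l₂ ^ n - 1)) • eigVec γ + (b * (l₁ ^ n - 1)) • eigVec β := by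
    rw [map_add, map_smul, map_smul, toEuclideanLin_eigVec hγn, toEuclideanLin_eigVec hβn,
      smul_smul, smul_smul]
  have ha := abs_le_of_eq_smul_eigVec_add_smul_eigVec hne himage
  have hb := abs_le_of_eq_smul_eigVec_add_smul_eigVec hne.symm (himage.trans (add_comm _ _))
  have hy : ‖toEuclideanLin (A ^ n - 1) (a • eigVec γ + b • eigVec β)‖ ≤ Real.exp (-τ * n) := by
    rwa [neg_mul_comm, mul_comm]
  have hsγ : 0 < √(1 + γ ^ 2) := by positivity
  have hsβ : 0 < √(1 + β ^ 2) := by positivity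
  refine ⟨a * √(1 + γ ^ 2), b * √(1 + β ^ 2), ?_, ?_, ?_⟩
  · calc |a * √(1 + γ ^ 2)|
        ≤ √(1 + γ ^ 2) * (√(1 + β ^ 2) / |γ - β| * Real.exp (-τ * n) / |l₂ ^ n - 1|) :=
          abs_mul_le_mul_div_abs hc hsγ.le (ha.trans (by gcongr))
      _ = _ := by rw [abs_sub_comm γ β]; ring
  · calc |b * √(1 + β ^ 2)|
        ≤ √(1 + β ^ 2) * (√(1 + γ ^ 2) / |β - γ| * Real.exp (-τ * n) / |l₁ ^ n - 1|) :=
          abs_mul_le_mul_div_abs hd hsβ.le (hb.trans (by gcongr))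
      _ = _ := by rw [abs_sub_comm (l₁ ^ n)]; ring
  · rw [mul_div_cancel_right₀ a hsγ.ne', mul_div_cancel_right₀ b hsβ.ne']

/-- The ellipse `(Aⁿ - I)⁻¹ B(0, e^{-nτ})` is contained in the parallelogram
with vertices `± c₁ λ_{n,2} (1,γ)/√(1+γ²) ± c₁ λ_{n,1} (1,β)/√(1+β²)`, where
`c₁ = √(1+β²)√(1+γ²)/|β - γ|`, `λ_{n,1} = e^{-τn}/|1 - λ₁ⁿ|` and
`λ_{n,2} = e^{-τn}/|λ₂ⁿ - 1|`. -/
theorem ellipse_subset_parallelogram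
    (A : Matrix (Fin 2) (Fin 2) ℝ) (l₁ l₂ γ β : ℝ) (hne : γ ≠ β)
    (h0 : 0 < |l₁|) (h1 : |l₁| < 1) (h2 : 1 < |l₂|)
    (hγ : A.mulVec ![1, γ] = l₂ • ![1, γ])
    (hβ : A.mulVec ![1, β] = l₁ • ![1, β])
    (τ : ℝ) (hτ : 0 < τ) (n : ℕ) (hn : 1 ≤ n)
    (hinv : IsUnit (A ^ n - 1)) :
    {x : EuclideanSpace ℝ (Fin 2) |
        ‖Matrix.toEuclideanLin (A ^ n - 1) x‖ ≤ Real.exp (-(n : ℝ) * τ)}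
      ⊆ {x : EuclideanSpace ℝ (Fin 2) | ∃ t s : ℝ,
        |t| ≤ Real.sqrt (1 + β ^ 2) * Real.sqrt (1 + γ ^ 2) / |β - γ|
          * (Real.exp (-τ * n) / |l₂ ^ n - 1|) ∧
        |s| ≤ Real.sqrt (1 + β ^ 2) * Real.sqrt (1 + γ ^ 2) / |β - γ|
          * (Real.exp (-τ * n) / |1 - l₁ ^ n|) ∧
        x = (t / Real.sqrt (1 + γ ^ 2)) • eigVec γ
          + (s / Real.sqrt (1 + β ^ 2)) • eigVec β} :=
  ellipse_subset_parallelogram_general A l₁ l₂ γ β hne hγ hβ τ n hinv
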